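/- Let K ∈ {ℚ₂(√-1), ℚ₂(√-5)} with ring of integers 𝒪, uniformizer π, and normalized valuation v. Suppose u, w ∈ 𝒪 are units with u ≡ w (mod π²). Then there exist α, β ∈ 𝒪, not both divisible by π, such that v(uα⁶ + wβ⁶) ≥ 3. -/

import Mathlib

open Polynomial Finset

section Defs
variable {A : Type*} [CommRing A] [Algebra ℤ_[2] A]

/-- `x` belongs to the ring of integers `𝒪` (the integral closure of `ℤ₂`). -/
def inO (x : A) : Prop := IsIntegral ℤ_[2] x

/-- `x` is divisible by `π ^ n` within the ring of integers, i.e. the normalized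
valuation of `x` is at least `n`. -/
def pdvd (π : A) (n : ℕ) (x : A) : Prop := ∃ y : A, inO y ∧ x = π ^ n * y

/-- `x` is a unit of the ring of integers. -/
def isUnitO (x : A) : Prop := inO x ∧ ∃ y : A, inO y ∧ x * y = 1

/-- `π` is a uniformizer: a generator of the maximal ideal (= set of nonunits) of `𝒪`. -/
def IsUniformizerO (π : A) : Prop :=
  inO π ∧ ¬ isUnitO π ∧ ∀ x : A, inO x → ¬ isUnitO x → pdvd π 1 x

/-- the normalized valuation of `a` equals `r`. -/
def hasVal (π : A) (r : ℕ) (a : A) : Prop := pdvd π r a ∧ ¬ pdvd π (r + 1) a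

/-- `a` is at level `k` : its valuation is congruent to `k` mod `6`. -/
def atLevel (π : A) (k : ℕ) (a : A) : Prop := ∃ r : ℕ, r % 6 = k % 6 ∧ hasVal π r a

/-- `a` and `b` are both at level `k` and have the same `π`-coefficient. -/
def SameCoeff (π : A) (k : ℕ) (a b : A) : Prop :=
  ∃ (r s : ℕ) (u w : A), r % 6 = k % 6 ∧ s % 6 = k % 6 ∧ isUnitO u ∧ isUnitO w ∧
    a = π ^ r * u ∧ b = π ^ s * w ∧ pdvd π 2 (u - w)

/-- `a` and `b` are both at level `k` and have different `π`-coefficients. -/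
def DiffCoeff (π : A) (k : ℕ) (a b : A) : Prop :=
  ∃ (r s : ℕ) (u w : A), r % 6 = k % 6 ∧ s % 6 = k % 6 ∧ isUnitO u ∧ isUnitO w ∧
    a = π ^ r * u ∧ b = π ^ s * w ∧ ¬ pdvd π 2 (u - w)

end Defs

/-- `Kd d` is the quadratic extension `ℚ₂(√d)` of the `2`-adic numbers. -/
noncomputable abbrev Kd (d : ℚ_[2]) : Type := AdjoinRoot (X ^ 2 - C d)

noncomputable instance (d : ℚ_[2]) : Algebra ℤ_[2] (Kd d) :=
  ((algebraMap ℚ_[2] (Kd d)).comp (algebraMap ℤ_[2] ℚ_[2])).toAlgebra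

/-- the additive sextic form `∑ aᵢ xᵢ⁶` in seven variables has a nontrivial zero over `𝒪`. -/
def HasNontrivialZero {d : ℚ_[2]} (a : Fin 7 → Kd d) : Prop :=
  ∃ x : Fin 7 → Kd d, (∀ i, inO (x i)) ∧ x ≠ 0 ∧ ∑ i, a i * x i ^ 6 = 0

/-!
Work in the ring of integers `𝒪 = ℤ₂[√D]`, `D ≡ 3 mod 4`. Its residue field is `𝔽₂`, so
`π ∣ x² - x` for every `x ∈ 𝒪` and every unit is `≡ 1 mod π`; and `K` is ramified: `2 = π² e`
with `e` a unit. Writing `u = w + π² (c - 1)` and taking `α = 1`, `β = 1 + π c`, the binomial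
expansion gives `u + w β⁶ ≡ π² ((e w - 1) + (w - 1) c² + (c² - c)) mod π³`, and `π` divides
each bracketed term.

Both facts about `𝒪` are read off the norm `N(a + b√D) = a² - D b²`: units of `𝒪` are its
elements of norm a `2`-adic unit, `N(x) N(x - 1)` is always even, and `N(1 ± √D) = 1 - D` has
valuation one.
-/

local notation "𝒪[" d "]" => integralClosure ℤ_[2] (Kd d)

section Contraction

variable {R : Type*} [CommRing R] {π : R}

lemma dvd_sub_one_of_isUnit (hres : ∀ x : R, π ∣ x ^ 2 - x) {v : R} (hv : IsUnit v) :
    π ∣ v - 1 := by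
  obtain ⟨v', hv'⟩ := hv.exists_left_inv
  rw [show v - 1 = v' * (v ^ 2 - v) by linear_combination (1 - v) * hv']
  exact (hres v).mul_left v'

theorem exists_sextic_contraction (hπ : ¬ IsUnit π) (hres : ∀ x : R, π ∣ x ^ 2 - x) {e : R}
    (he : IsUnit e) (h2 : 2 = π ^ 2 * e) {u w : R} (hw : IsUnit w) (huw : π ^ 2 ∣ u - w) :
    ∃ α β : R, ¬ (π ∣ α ∧ π ∣ β) ∧ π ^ 3 ∣ u * α ^ 6 + w * β ^ 6 := by
  obtain ⟨c, hc⟩ : ∃ c, u - w = π ^ 2 * (c - 1) := by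
    obtain ⟨y, hy⟩ := huw
    exact ⟨y + 1, by rw [hy]; ring⟩
  refine ⟨1, 1 + π * c, fun h ↦ hπ (isUnit_of_dvd_one h.1), ?_⟩
  have hlow : π ∣ (e * w - 1) + (w - 1) * c ^ 2 + (c ^ 2 - c) :=
    dvd_add (dvd_add (dvd_sub_one_of_isUnit hres (he.mul hw))
      ((dvd_sub_one_of_isUnit hres hw).mul_right _)) (hres c)
  have hexpand : u * 1 ^ 6 + w * (1 + π * c) ^ 6 =
      π ^ 2 * ((e * w - 1) + (w - 1) * c ^ 2 + (c ^ 2 - c)) +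
        π ^ 3 * (w * (3 * e * c + 20 * c ^ 3 + 6 * π ^ 2 * c ^ 5 + π ^ 3 * c ^ 6) +
          π * (e * c + 7 * e * c ^ 2 * w + 15 * c ^ 4 * w)) := by
    linear_combination hc + (w + 3 * π * c * w + 7 * π ^ 2 * c ^ 2 * w + π ^ 2 * c) * h2
  rw [hexpand, pow_succ]
  exact dvd_add (mul_dvd_mul_left _ hlow) (dvd_mul_right _ _)

end Contraction

section IntegralClosure

variable {A : Type*} [CommRing A] [Algebra ℤ_[2] A]

lemma pdvd_coe_iff {π x : integralClosure ℤ_[2] A} {n : ℕ} : pdvd (π : A) n x ↔ π ^ n ∣ x := by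
  constructor
  · rintro ⟨y, hy, hxy⟩
    exact ⟨⟨y, hy⟩, Subtype.ext hxy⟩
  · rintro ⟨y, rfl⟩
    exact ⟨y, y.2, rfl⟩

lemma isUnitO_coe_iff {x : integralClosure ℤ_[2] A} : isUnitO (x : A) ↔ IsUnit x := by
  constructor
  · rintro ⟨-, y, hy, hxy⟩
    exact IsUnit.of_mul_eq_one ⟨y, hy⟩ (Subtype.ext hxy)
  · rintro ⟨⟨x, y, hxy, -⟩, rfl⟩
    exact ⟨x.2, y, y.2, congrArg Subtype.val hxy⟩

lemma isUniformizerO_coe_iff {π : integralClosure ℤ_[2] A} :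
    IsUniformizerO (π : A) ↔ ¬ IsUnit π ∧ ∀ x, ¬ IsUnit x → π ∣ x := by
  constructor
  · rintro ⟨-, hπ, hdvd⟩
    refine ⟨isUnitO_coe_iff.not.1 hπ, fun x hx ↦ ?_⟩
    simpa using pdvd_coe_iff.1 (hdvd x x.2 (isUnitO_coe_iff.not.2 hx))
  · rintro ⟨hπ, hdvd⟩
    refine ⟨π.2, isUnitO_coe_iff.not.2 hπ, fun x hx hxu ↦ ?_⟩
    exact (pdvd_coe_iff (x := ⟨x, hx⟩)).2 <| by
      simpa using hdvd _ (isUnitO_coe_iff.not.1 hxu)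

end IntegralClosure

section QuadraticExtension

variable {F : Type*} [Field F] (d : F)

lemma monic_X_sq_sub_C : (X ^ 2 - C d).Monic := monic_X_pow_sub_C d two_ne_zero

instance : Nontrivial (AdjoinRoot (X ^ 2 - C d)) :=
  AdjoinRoot.nontrivial _ (by rw [degree_X_pow_sub_C two_pos]; decide)

lemma root_sq : AdjoinRoot.root (X ^ 2 - C d) ^ 2 = algebraMap F _ d := by
  have h := AdjoinRoot.eval₂_root (X ^ 2 - C d)
  rwa [eval₂_sub, eval₂_X_pow, eval₂_C, sub_eq_zero] at h

lemma eq_add_mul_root (x : AdjoinRoot (X ^ 2 - C d)) :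
    x = algebraMap F _ ((AdjoinRoot.modByMonicHom (monic_X_sq_sub_C d) x).coeff 0) +
      algebraMap F _ ((AdjoinRoot.modByMonicHom (monic_X_sq_sub_C d) x).coeff 1) *
        AdjoinRoot.root _ := by
  obtain ⟨p, rfl⟩ := AdjoinRoot.mk_surjective x
  have hdeg : (p %ₘ (X ^ 2 - C d)).natDegree ≤ 1 := by
    have := natDegree_modByMonic_lt p (monic_X_sq_sub_C d)
      fun h ↦ by simpa [natDegree_X_pow_sub_C] using congrArg natDegree h
    rw [natDegree_X_pow_sub_C] at this
    omega
  conv_lhs => rw [← AdjoinRoot.mk_leftInverse (monic_X_sq_sub_C d) (AdjoinRoot.mk _ p),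
    AdjoinRoot.modByMonicHom_mk, ← AdjoinRoot.aeval_eq, eq_X_add_C_of_natDegree_le_one hdeg]
  simp only [AdjoinRoot.modByMonicHom_mk, map_add, map_mul, aeval_C, aeval_X]
  ring

noncomputable def qconj : AdjoinRoot (X ^ 2 - C d) →ₐ[F] AdjoinRoot (X ^ 2 - C d) :=
  AdjoinRoot.liftAlgHom _ (Algebra.ofId F _) (-AdjoinRoot.root _) <| by
    rw [eval₂_sub, eval₂_X_pow, eval₂_C, neg_sq, root_sq]
    exact sub_self _

lemma qconj_add_mul_root (a b : F) :
    qconj d (algebraMap F _ a + algebraMap F _ b * AdjoinRoot.root _) =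
      algebraMap F _ a - algebraMap F _ b * AdjoinRoot.root _ := by
  simp [qconj, sub_eq_add_neg]

noncomputable def qnorm (x : AdjoinRoot (X ^ 2 - C d)) : F :=
  (AdjoinRoot.modByMonicHom (monic_X_sq_sub_C d) x).coeff 0 ^ 2 -
    d * (AdjoinRoot.modByMonicHom (monic_X_sq_sub_C d) x).coeff 1 ^ 2

lemma add_mul_root_mul_qconj (a b : F) :
    (algebraMap F _ a + algebraMap F _ b * AdjoinRoot.root (X ^ 2 - C d)) *
      qconj d (algebraMap F _ a + algebraMap F _ b * AdjoinRoot.root _) =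
      algebraMap F _ (a ^ 2 - d * b ^ 2) := by
  rw [qconj_add_mul_root, map_sub, map_mul, map_pow, map_pow, ← root_sq]
  ring

lemma algebraMap_qnorm (x : AdjoinRoot (X ^ 2 - C d)) :
    algebraMap F _ (qnorm d x) = x * qconj d x := by
  rw [qnorm, ← add_mul_root_mul_qconj, ← eq_add_mul_root]

lemma qnorm_add_mul_root (a b : F) :
    qnorm d (algebraMap F _ a + algebraMap F _ b * AdjoinRoot.root _) = a ^ 2 - d * b ^ 2 :=
  (algebraMap F (AdjoinRoot (X ^ 2 - C d))).injective <| by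
    rw [algebraMap_qnorm, add_mul_root_mul_qconj]

lemma qnorm_mul (x y : AdjoinRoot (X ^ 2 - C d)) : qnorm d (x * y) = qnorm d x * qnorm d y :=
  (algebraMap F (AdjoinRoot (X ^ 2 - C d))).injective <| by
    rw [map_mul, algebraMap_qnorm, algebraMap_qnorm, algebraMap_qnorm, map_mul]
    ring

lemma qnorm_algebraMap (a : F) : qnorm d (algebraMap F (AdjoinRoot (X ^ 2 - C d)) a) = a ^ 2 :=
  (algebraMap F (AdjoinRoot (X ^ 2 - C d))).injective <| by
    rw [algebraMap_qnorm, AlgHom.commutes, map_pow]; ring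

end QuadraticExtension

section TwoAdicIntegers

open PadicInt

lemma PadicInt.four_dvd_iff_toZModPow (x : ℤ_[2]) : 4 ∣ x ↔ toZModPow 2 x = 0 := by
  rw [← RingHom.mem_ker, ker_toZModPow, Ideal.mem_span_singleton]
  norm_num

lemma PadicInt.two_dvd_iff_toZModPow (x : ℤ_[2]) : 2 ∣ x ↔ 2 * toZModPow 2 x = 0 := by
  rw [← mul_dvd_mul_iff_left (two_ne_zero : (2 : ℤ_[2]) ≠ 0), ← map_ofNat (toZModPow 2) 2,
    ← map_mul, ← four_dvd_iff_toZModPow]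
  norm_num

lemma PadicInt.not_isUnit_iff_two_dvd (x : ℤ_[2]) : ¬ IsUnit x ↔ 2 ∣ x := by
  rw [not_isUnit_iff, norm_lt_one_iff_dvd]
  norm_num

lemma PadicInt.two_dvd_mul_add_one (n : ℤ_[2]) : 2 ∣ n * (n + 1) := by
  rw [two_dvd_iff_toZModPow, map_mul, map_add, map_one]
  generalize toZModPow 2 n = a
  revert a
  decide

variable {D : ℤ_[2]}

lemma PadicInt.toZModPow_eq_neg_one (hD : 4 ∣ D + 1) : toZModPow 2 D = -1 := by
  rw [four_dvd_iff_toZModPow, map_add, map_one] at hD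
  exact eq_neg_of_add_eq_zero_left hD

lemma PadicInt.isUnit_of_four_dvd_add_one (hD : 4 ∣ D + 1) : IsUnit D := by
  rw [← not_not (a := IsUnit D), not_isUnit_iff_two_dvd, two_dvd_iff_toZModPow,
    toZModPow_eq_neg_one hD]
  decide

lemma PadicInt.exists_one_sub_eq_two_mul_unit (hD : 4 ∣ D + 1) :
    ∃ c : ℤ_[2], IsUnit c ∧ 1 - D = 2 * c := by
  obtain ⟨k, hk⟩ := hD
  refine ⟨1 - 2 * k, ?_, by linear_combination -hk⟩
  rw [← not_not (a := IsUnit _), not_isUnit_iff_two_dvd, two_dvd_iff_toZModPow]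
  simp only [map_sub, map_mul, map_one, map_ofNat]
  generalize toZModPow 2 k = a
  revert a
  decide

lemma PadicInt.two_dvd_of_four_dvd_sq_sub_mul_sq (hD : 4 ∣ D + 1) {A B : ℤ_[2]}
    (h : 4 ∣ A ^ 2 - D * B ^ 2) : 2 ∣ A ∧ 2 ∣ B := by
  rw [four_dvd_iff_toZModPow, map_sub, map_mul, map_pow, map_pow, toZModPow_eq_neg_one hD] at h
  rw [two_dvd_iff_toZModPow, two_dvd_iff_toZModPow]
  revert h
  generalize toZModPow 2 A = a
  generalize toZModPow 2 B = b
  revert a b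
  decide

end TwoAdicIntegers

section TwoAdicQuadratic

variable (d : ℚ_[2])

-- `AdjoinRoot` carries its own `ℤ₂`-action, different from the one of the algebra structure.
instance : @IsScalarTower ℤ_[2] ℚ_[2] (Kd d) Algebra.toSMul Algebra.toSMul Algebra.toSMul :=
  .of_algebraMap_eq fun _ ↦ rfl

lemma isIntegral_algebraMap_iff_norm_le_one (q : ℚ_[2]) :
    IsIntegral ℤ_[2] (algebraMap ℚ_[2] (Kd d) q) ↔ ‖q‖ ≤ 1 := by
  rw [isIntegral_algebraMap_iff (algebraMap ℚ_[2] (Kd d)).injective,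
    IsIntegrallyClosed.isIntegral_iff]
  exact ⟨fun ⟨z, hz⟩ ↦ hz ▸ z.2, fun h ↦ ⟨⟨q, h⟩, rfl⟩⟩

variable {d} in
lemma IsIntegral.qconj {x : Kd d} (hx : IsIntegral ℤ_[2] x) : IsIntegral ℤ_[2] (_root_.qconj d x) :=
  hx.map (_root_.qconj d)

variable {d} in
lemma norm_qnorm_le_one {x : Kd d} (hx : IsIntegral ℤ_[2] x) : ‖qnorm d x‖ ≤ 1 := by
  rw [← isIntegral_algebraMap_iff_norm_le_one, algebraMap_qnorm]
  exact hx.mul hx.qconj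

lemma isUnit_iff_norm_qnorm_eq_one (x : 𝒪[d]) : IsUnit x ↔ ‖qnorm d x‖ = 1 := by
  constructor
  · rintro ⟨⟨x, y, hxy, -⟩, rfl⟩
    have h : ‖qnorm d x‖ * ‖qnorm d y‖ = 1 := by
      rw [← norm_mul, ← qnorm_mul, ← Subalgebra.coe_mul, hxy, OneMemClass.coe_one,
        ← map_one (algebraMap ℚ_[2] _), qnorm_algebraMap, one_pow, norm_one]
    have hx := norm_qnorm_le_one x.2
    have hy := norm_qnorm_le_one y.2
    nlinarith [norm_nonneg (qnorm d x), norm_nonneg (qnorm d y)]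
  · intro h
    have hq : qnorm d x ≠ 0 := by rintro h0; simp [h0] at h
    let y : 𝒪[d] := ⟨qconj d x * algebraMap ℚ_[2] _ (qnorm d x)⁻¹, x.2.qconj.mul <|
      (isIntegral_algebraMap_iff_norm_le_one d _).2 (by rw [norm_inv, h, inv_one])⟩
    refine IsUnit.of_mul_eq_one y (Subtype.ext ?_)
    change (x : Kd d) * (qconj d x * _) = 1
    rw [← mul_assoc, ← algebraMap_qnorm, ← map_mul, mul_inv_cancel₀ hq, map_one]

lemma norm_qnorm_le_inv_two {x : 𝒪[d]} (hx : ¬ IsUnit x) : ‖qnorm d x‖ ≤ 2⁻¹ := by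
  have hlt : ‖qnorm d x‖ < 1 :=
    (norm_qnorm_le_one x.2).lt_of_ne ((isUnit_iff_norm_qnorm_eq_one d x).not.1 hx)
  simpa using (Padic.norm_le_pow_iff_norm_lt_pow_add_one (qnorm d x) (-1)).2 (by simpa using hlt)

lemma isUnit_of_two_eq_sq_mul {π s : 𝒪[d]} (hπ : ¬ IsUnit π) (hs : 2 = π ^ 2 * s) :
    IsUnit s := by
  have hnorm : ‖qnorm d π‖ ^ 2 * ‖qnorm d s‖ = 4⁻¹ := by
    have h2 : qnorm d ((2 : 𝒪[d]) : Kd d) = 4 := by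
      rw [show ((2 : 𝒪[d]) : Kd d) = algebraMap ℚ_[2] _ 2 from (map_ofNat _ 2).symm,
        qnorm_algebraMap]
      norm_num
    rw [hs, Subalgebra.coe_mul, qnorm_mul, SubmonoidClass.coe_pow, sq, qnorm_mul] at h2
    rw [sq, ← norm_mul, ← norm_mul, h2, show (4 : ℚ_[2]) = (2 : ℕ) ^ 2 by norm_num, norm_pow,
      Padic.norm_p]
    norm_num
  have hπ' : ‖qnorm d π‖ ^ 2 ≤ 4⁻¹ := by
    have := norm_qnorm_le_inv_two d hπ
    nlinarith [norm_nonneg (qnorm d π)]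
  rw [isUnit_iff_norm_qnorm_eq_one]
  refine le_antisymm (norm_qnorm_le_one s.2) ?_
  nlinarith [mul_le_mul_of_nonneg_right hπ' (norm_nonneg (qnorm d s))]

lemma algebraMap_padicInt_apply (A : ℤ_[2]) :
    algebraMap ℤ_[2] (Kd d) A = algebraMap ℚ_[2] (Kd d) A := rfl

end TwoAdicQuadratic

section RingOfIntegers

lemma isIntegral_root (D : ℤ_[2]) : IsIntegral ℤ_[2] (AdjoinRoot.root (X ^ 2 - C (D : ℚ_[2]))) :=
  ⟨X ^ 2 - C D, monic_X_pow_sub_C _ two_ne_zero, by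
    rw [eval₂_sub, eval₂_X_pow, eval₂_C, root_sq]
    exact sub_self _⟩

variable {D : ℤ_[2]}

lemma exists_coe_eq_of_norm_sq_sub_mul_sq_le_one (hD : 4 ∣ D + 1) {a b : ℚ_[2]}
    (ha : ‖2 * a‖ ≤ 1) (hb : ‖2 * b‖ ≤ 1) (h : ‖a ^ 2 - D * b ^ 2‖ ≤ 1) :
    (∃ A : ℤ_[2], (A : ℚ_[2]) = a) ∧ ∃ B : ℤ_[2], (B : ℚ_[2]) = b := by
  obtain ⟨A', hA'⟩ : ∃ A' : ℤ_[2], (A' : ℚ_[2]) = 2 * a := ⟨⟨_, ha⟩, rfl⟩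
  obtain ⟨B', hB'⟩ : ∃ B' : ℤ_[2], (B' : ℚ_[2]) = 2 * b := ⟨⟨_, hb⟩, rfl⟩
  obtain ⟨M, hM⟩ : ∃ M : ℤ_[2], (M : ℚ_[2]) = a ^ 2 - D * b ^ 2 := ⟨⟨_, h⟩, rfl⟩
  have h4 : 4 ∣ A' ^ 2 - D * B' ^ 2 := ⟨M, PadicInt.ext <| by
    push_cast [hA', hB', hM, show ((4 : ℤ_[2]) : ℚ_[2]) = 4 from map_ofNat PadicInt.Coe.ringHom 4]
    ring⟩
  obtain ⟨⟨A, rfl⟩, ⟨B, rfl⟩⟩ := PadicInt.two_dvd_of_four_dvd_sq_sub_mul_sq hD h4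
  push_cast at hA' hB'
  exact ⟨⟨A, mul_left_cancel₀ two_ne_zero hA'⟩, ⟨B, mul_left_cancel₀ two_ne_zero hB'⟩⟩

lemma exists_eq_algebraMap_add_mul_root (hD : 4 ∣ D + 1) {x : Kd D} (hx : IsIntegral ℤ_[2] x) :
    ∃ A B : ℤ_[2], x = algebraMap ℤ_[2] _ A + algebraMap ℤ_[2] _ B * AdjoinRoot.root _ := by
  obtain ⟨a, b, rfl⟩ : ∃ a b : ℚ_[2],
      x = algebraMap ℚ_[2] _ a + algebraMap ℚ_[2] _ b * AdjoinRoot.root _ :=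
    ⟨_, _, eq_add_mul_root _ x⟩
  have htrace : ‖2 * a‖ ≤ 1 := by
    rw [← isIntegral_algebraMap_iff_norm_le_one]
    convert hx.add hx.qconj using 1
    rw [qconj_add_mul_root, map_mul, map_ofNat]
    ring
  have hdisc : ‖(2 * b) ^ 2‖ ≤ 1 := by
    have hD1 : ‖(D : ℚ_[2])‖ = 1 := PadicInt.isUnit_iff.1 (PadicInt.isUnit_of_four_dvd_add_one hD)
    have hdisc' : ‖(D : ℚ_[2]) * (2 * b) ^ 2‖ ≤ 1 := by
      rw [← isIntegral_algebraMap_iff_norm_le_one]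
      convert (hx.sub hx.qconj).pow 2 using 1
      rw [qconj_add_mul_root, map_mul, map_pow, map_mul, map_ofNat, ← root_sq]
      ring
    rwa [norm_mul, hD1, one_mul] at hdisc'
  have hnorm : ‖a ^ 2 - D * b ^ 2‖ ≤ 1 := by
    rw [← qnorm_add_mul_root]
    exact norm_qnorm_le_one hx
  rw [norm_pow, pow_le_one_iff_of_nonneg (norm_nonneg _) two_ne_zero] at hdisc
  obtain ⟨⟨A, rfl⟩, ⟨B, rfl⟩⟩ := exists_coe_eq_of_norm_sq_sub_mul_sq_le_one hD htrace hdisc hnorm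
  exact ⟨A, B, rfl⟩

lemma not_isUnit_mul_sub_one (hD : 4 ∣ D + 1) (x : 𝒪[D]) : ¬ IsUnit (x * (x - 1)) := by
  obtain ⟨A, B, hx⟩ := exists_eq_algebraMap_add_mul_root hD x.2
  have hx1 : (x : Kd D) - 1 =
      algebraMap ℤ_[2] _ (A - 1) + algebraMap ℤ_[2] _ B * AdjoinRoot.root _ := by
    rw [hx, map_sub, map_one]
    ring
  have qnorm_eq : ∀ A' : ℤ_[2], qnorm (D : ℚ_[2])
      (algebraMap ℤ_[2] _ A' + algebraMap ℤ_[2] _ B * AdjoinRoot.root _) =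
      ((A' ^ 2 - D * B ^ 2 : ℤ_[2]) : ℚ_[2]) := fun A' ↦ by
    rw [algebraMap_padicInt_apply, algebraMap_padicInt_apply, qnorm_add_mul_root]
    push_cast
    rfl
  -- the two norms differ by the odd number `2A - 1`, so one of them is even
  have heven : 2 ∣ (A ^ 2 - D * B ^ 2) * ((A - 1) ^ 2 - D * B ^ 2) := by
    rw [show (A ^ 2 - D * B ^ 2) * ((A - 1) ^ 2 - D * B ^ 2) =
      (A ^ 2 - D * B ^ 2) * (A ^ 2 - D * B ^ 2 + 1) - 2 * (A * (A ^ 2 - D * B ^ 2)) by ring]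
    exact dvd_sub (PadicInt.two_dvd_mul_add_one _) (dvd_mul_right _ _)
  rw [isUnit_iff_norm_qnorm_eq_one, Subalgebra.coe_mul, Subalgebra.coe_sub, OneMemClass.coe_one,
    qnorm_mul, hx1, hx, qnorm_eq, qnorm_eq, ← PadicInt.coe_mul, ← PadicInt.norm_def]
  exact ((PadicInt.norm_lt_one_iff_dvd _).2 (by exact_mod_cast heven)).ne

lemma norm_qnorm_one_add_mul_root_lt_one (hD : 4 ∣ D + 1) {b : ℚ_[2]} (hb : b ^ 2 = 1) :
    ‖qnorm (D : ℚ_[2]) (1 + algebraMap ℚ_[2] _ b * AdjoinRoot.root _)‖ < 1 := by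
  obtain ⟨c, -, hDc⟩ := PadicInt.exists_one_sub_eq_two_mul_unit hD
  rw [← map_one (algebraMap ℚ_[2] (Kd D)), qnorm_add_mul_root, hb, one_pow, mul_one,
    ← PadicInt.coe_one, ← PadicInt.coe_sub, ← PadicInt.norm_def, hDc]
  exact (PadicInt.norm_lt_one_iff_dvd _).2 (by exact_mod_cast dvd_mul_right 2 c)

lemma sq_dvd_two (hD : 4 ∣ D + 1) {π : 𝒪[D]} (hdvd : ∀ x : 𝒪[D], ¬ IsUnit x → π ∣ x) :
    π ^ 2 ∣ 2 := by
  let r : 𝒪[D] := ⟨_, isIntegral_root D⟩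
  have dvd_one_add : ∀ b : ℚ_[2], b ^ 2 = 1 → ∀ y : 𝒪[D],
      (y : Kd D) = 1 + algebraMap ℚ_[2] _ b * AdjoinRoot.root _ → π ∣ y :=
    fun b hb y hy ↦ hdvd y fun hunit ↦ (norm_qnorm_one_add_mul_root_lt_one hD hb).ne <|
      hy ▸ (isUnit_iff_norm_qnorm_eq_one _ y).1 hunit
  have h_add : π ∣ 1 + r := dvd_one_add 1 (one_pow 2) _ (by simp [r])
  have h_sub : π ∣ 1 - r := dvd_one_add (-1) (by norm_num) _ (by simp [r, sub_eq_add_neg])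
  obtain ⟨c, hc, hDc⟩ := PadicInt.exists_one_sub_eq_two_mul_unit hD
  have hr : r ^ 2 = algebraMap ℤ_[2] 𝒪[D] D := Subtype.ext (root_sq _)
  have h2 : (2 : 𝒪[D]) = (1 + r) * (1 - r) * algebraMap ℤ_[2] _ ↑hc.unit⁻¹ := by
    rw [show (1 + r) * (1 - r) = algebraMap ℤ_[2] 𝒪[D] (1 - D) by
        rw [map_sub, map_one, ← hr]; ring,
      ← map_mul, hDc, mul_assoc, hc.mul_val_inv, mul_one, map_ofNat]
  rw [h2, pow_two π]
  exact (mul_dvd_mul h_add h_sub).mul_right _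

end RingOfIntegers

/-- s3-contraction: two units with the same `π`-coefficient can be contracted to a
variable at least three levels higher. -/
theorem stmt4 (d : ℚ_[2]) (hd : d = -1 ∨ d = -5) (π : Kd d) (hπ : IsUniformizerO π)
    (u w : Kd d) (hu : isUnitO u) (hw : isUnitO w) (huw : pdvd π 2 (u - w)) :
    ∃ α β : Kd d, inO α ∧ inO β ∧ ¬ (pdvd π 1 α ∧ pdvd π 1 β) ∧
      pdvd π 3 (u * α ^ 6 + w * β ^ 6) := by
  obtain ⟨D, rfl, hD⟩ : ∃ D : ℤ_[2], (D : ℚ_[2]) = d ∧ 4 ∣ D + 1 := by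
    rcases hd with rfl | rfl
    exacts [⟨-1, by push_cast; rfl, by simp⟩, ⟨-5, by push_cast; rfl, ⟨-1, by ring⟩⟩]
  lift π to 𝒪[D] using hπ.1
  lift u to 𝒪[D] using hu.1
  lift w to 𝒪[D] using hw.1
  obtain ⟨hπ, hdvd⟩ := isUniformizerO_coe_iff.1 hπ
  obtain ⟨e, h2⟩ := sq_dvd_two hD hdvd
  have hres : ∀ x, π ∣ x ^ 2 - x := fun x ↦
    hdvd _ (by rw [pow_two x, ← mul_sub_one]; exact not_isUnit_mul_sub_one hD x)
  obtain ⟨α, β, hαβ, hsum⟩ := exists_sextic_contraction hπ hres (isUnit_of_two_eq_sq_mul _ hπ h2)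
    h2 (isUnitO_coe_iff.1 hw) ((pdvd_coe_iff (x := u - w)).1 huw)
  refine ⟨α, β, α.2, β.2, ?_, (pdvd_coe_iff (x := u * α ^ 6 + w * β ^ 6)).2 hsum⟩
  simpa [pdvd_coe_iff] using hαβ
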